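/- arXiv:2004.02831 — 5 statements merged into one kernel-verified Lean document; each statement's English description precedes it below -/
import Mathlib

section
/- The function (a,b) ↦ Λ(a,b) on (0,∞)² is concave. -/
/-!
Writing `a ^ t * b ^ (1 - t) = b * exp ((log a - log b) * t)` and integrating gives
`Λ(a, b) = ∫₀¹ a ^ t * b ^ (1 - t) dt`. Each weighted geometric mean
`(a, b) ↦ a ^ t * b ^ (1 - t)` is concave on the open quadrant: by weighted AM–GM it lies
below its tangent plane at every point. An integral of concave functions is concave.
-/

open Real

noncomputable def logMean (a b : ℝ) : ℝ :=
  if a = b then a else (a - b) / (Real.log a - Real.log b)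

open MeasureTheory Set

theorem ConcaveOn.integral {α E : Type*} [MeasurableSpace α] [AddCommGroup E] [Module ℝ E]
    {μ : Measure α} {s : Set E} {f : α → E → ℝ} (hs : Convex ℝ s)
    (hf : ∀ᵐ t ∂μ, ConcaveOn ℝ s (f t))
    (hint : ∀ x ∈ s, Integrable (fun t => f t x) μ) :
    ConcaveOn ℝ s (fun x => ∫ t, f t x ∂μ) := by
  refine ⟨hs, fun x hx y hy l m hl hm hlm => ?_⟩
  simp only [smul_eq_mul]
  rw [← integral_const_mul, ← integral_const_mul,
    ← integral_add ((hint x hx).const_mul l) ((hint y hy).const_mul m)]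
  refine integral_mono_ae (((hint x hx).const_mul l).add ((hint y hy).const_mul m))
    (hint _ (hs hx hy hl hm hlm)) ?_
  filter_upwards [hf] with t ht
  exact ht.2 hx hy hl hm hlm

theorem rpow_mul_rpow_le_tangent {u v x y a b : ℝ} (hu : 0 ≤ u) (hv : 0 ≤ v) (huv : u + v = 1)
    (hx : 0 ≤ x) (hy : 0 ≤ y) (ha : 0 < a) (hb : 0 < b) :
    x ^ u * y ^ v ≤ a ^ u * b ^ v * (u * (x / a) + v * (y / b)) :=
  calc x ^ u * y ^ v = a ^ u * b ^ v * ((x / a) ^ u * (y / b) ^ v) := by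
        rw [div_rpow hx ha.le, div_rpow hy hb.le, div_mul_div_comm,
          mul_div_cancel₀ _ (by positivity)]
    _ ≤ a ^ u * b ^ v * (u * (x / a) + v * (y / b)) := by
        gcongr
        exact geom_mean_le_arith_mean2_weighted hu hv (by positivity) (by positivity) huv

theorem concaveOn_rpow_mul_rpow {u v : ℝ} (hu : 0 ≤ u) (hv : 0 ≤ v) (huv : u + v = 1) :
    ConcaveOn ℝ (Ioi (0 : ℝ) ×ˢ Ioi (0 : ℝ)) (fun p : ℝ × ℝ => p.1 ^ u * p.2 ^ v) := by
  have hs : Convex ℝ (Ioi (0 : ℝ) ×ˢ Ioi (0 : ℝ)) := (convex_Ioi 0).prod (convex_Ioi 0)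
  refine ⟨hs, fun p hp q hq l m hl hm hlm => ?_⟩
  set r := l • p + m • q
  obtain ⟨hr₁, hr₂⟩ : 0 < r.1 ∧ 0 < r.2 := hs hp hq hl hm hlm
  have tangent (z : ℝ × ℝ) (hz : z ∈ Ioi (0 : ℝ) ×ˢ Ioi (0 : ℝ)) :=
    rpow_mul_rpow_le_tangent hu hv huv hz.1.le hz.2.le hr₁ hr₂
  calc l * (p.1 ^ u * p.2 ^ v) + m * (q.1 ^ u * q.2 ^ v)
      ≤ l * (r.1 ^ u * r.2 ^ v * (u * (p.1 / r.1) + v * (p.2 / r.2)))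
        + m * (r.1 ^ u * r.2 ^ v * (u * (q.1 / r.1) + v * (q.2 / r.2))) :=
        add_le_add (mul_le_mul_of_nonneg_left (tangent p hp) hl)
          (mul_le_mul_of_nonneg_left (tangent q hq) hm)
    _ = r.1 ^ u * r.2 ^ v *
          (u * ((l * p.1 + m * q.1) / r.1) + v * ((l * p.2 + m * q.2) / r.2)) := by
        ring
    _ = r.1 ^ u * r.2 ^ v * (u * (r.1 / r.1) + v * (r.2 / r.2)) := rfl
    _ = r.1 ^ u * r.2 ^ v := by
        rw [div_self hr₁.ne', div_self hr₂.ne', mul_one, mul_one, huv, mul_one]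

theorem rpow_mul_rpow_one_sub {a b : ℝ} (ha : 0 < a) (hb : 0 < b) (t : ℝ) :
    a ^ t * b ^ (1 - t) = b * exp ((log a - log b) * t) := by
  rw [rpow_def_of_pos ha, rpow_def_of_pos hb, ← exp_add]
  nth_rewrite 2 [← exp_log hb]
  rw [← exp_add]
  ring_nf

theorem logMean_eq_integral {a b : ℝ} (ha : 0 < a) (hb : 0 < b) :
    logMean a b = ∫ t in (0 : ℝ)..1, a ^ t * b ^ (1 - t) := by
  simp only [rpow_mul_rpow_one_sub ha hb]
  by_cases hab : a = b
  · subst hab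
    simp [logMean]
  · have hlog : log a - log b ≠ 0 :=
      sub_ne_zero.2 fun h => hab (log_injOn_pos (mem_Ioi.2 ha) (mem_Ioi.2 hb) h)
    rw [intervalIntegral.integral_const_mul, intervalIntegral.integral_comp_mul_left _ hlog,
      mul_zero, mul_one, integral_exp, smul_eq_mul, exp_sub, exp_log ha, exp_log hb, exp_zero,
      logMean, if_neg hab]
    field_simp

theorem logMean_concave :
    ConcaveOn ℝ (Set.Ioi (0:ℝ) ×ˢ Set.Ioi (0:ℝ)) (fun p : ℝ × ℝ => logMean p.1 p.2) := by
  have hs : Convex ℝ (Ioi (0 : ℝ) ×ˢ Ioi (0 : ℝ)) := (convex_Ioi 0).prod (convex_Ioi 0)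
  have hcont (p : ℝ × ℝ) (hp : p ∈ Ioi (0 : ℝ) ×ˢ Ioi (0 : ℝ)) :
      Continuous fun t : ℝ => p.1 ^ t * p.2 ^ (1 - t) := by
    have : p.1 ≠ 0 := hp.1.ne'
    have : p.2 ≠ 0 := hp.2.ne'
    fun_prop (disch := assumption)
  have hconc : ∀ᵐ t ∂volume.restrict (Ioc (0 : ℝ) 1),
      ConcaveOn ℝ (Ioi (0 : ℝ) ×ˢ Ioi (0 : ℝ))
        (fun p : ℝ × ℝ => p.1 ^ t * p.2 ^ (1 - t)) :=
    ae_restrict_of_forall_mem measurableSet_Ioc fun t ht =>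
      concaveOn_rpow_mul_rpow ht.1.le (sub_nonneg.2 ht.2) (add_sub_cancel _ _)
  refine (ConcaveOn.integral hs hconc fun p hp => (hcont p hp).integrableOn_Ioc).congr
    fun p hp => ?_
  dsimp only
  rw [logMean_eq_integral hp.1 hp.2, intervalIntegral.integral_of_le zero_le_one]
end

section
/- For all a, b > 0 and all ω ∈ ℝ, G(a,b) := (a−b)(log a − log b) satisfies G(a,b) ≥ g(ω)·a + g(−ω)·b where g(ω) := 1 − e^{−ω} + ω; moreover equality holds when ω = log(a/b). -/
/-! With `t = log (a / b) - ω`, substituting `a = b · exp (log (a / b))` turns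
`G a b - (g ω · a + g (-ω) · b)` into `b (exp t - 1 - t) + a (exp (-t) - 1 + t)`: two gaps of the
tangent-line inequality `1 + s ≤ exp s`, both nonnegative and both zero at `t = 0`. -/

open Real

noncomputable def G (a b : ℝ) : ℝ := (a - b) * (Real.log a - Real.log b)

noncomputable def g (ω : ℝ) : ℝ := 1 - Real.exp (-ω) + ω

noncomputable def expTangentGap (t : ℝ) : ℝ := exp t - 1 - t

lemma expTangentGap_nonneg (t : ℝ) : 0 ≤ expTangentGap t := by
  unfold expTangentGap
  linarith [add_one_le_exp t]

lemma expTangentGap_zero : expTangentGap 0 = 0 := by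
  simp [expTangentGap]

lemma G_sub_affine_eq {a b : ℝ} (ha : 0 < a) (hb : 0 < b) (ω : ℝ) :
    G a b - (g ω * a + g (-ω) * b) =
      b * expTangentGap (log (a / b) - ω) + a * expTangentGap (ω - log (a / b)) := by
  have hexp : exp (log (a / b)) = a / b := exp_log (div_pos ha hb)
  simp only [G, g, expTangentGap, neg_neg, ← log_div ha.ne' hb.ne', exp_sub, exp_neg, hexp]
  field_simp
  ring

theorem G_affine_lower_bound (a b : ℝ) (ha : 0 < a) (hb : 0 < b) :
    (∀ ω : ℝ, G a b ≥ g ω * a + g (-ω) * b) ∧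
    G a b = g (Real.log (a / b)) * a + g (-(Real.log (a / b))) * b := by
  refine ⟨fun ω => ?_, ?_⟩
  · rw [ge_iff_le, ← sub_nonneg, G_sub_affine_eq ha hb]
    exact add_nonneg (mul_nonneg hb.le (expTangentGap_nonneg _))
      (mul_nonneg ha.le (expTangentGap_nonneg _))
  · rw [← sub_eq_zero, G_sub_affine_eq ha hb, sub_self, expTangentGap_zero]
    ring
end

section
/- Suppose a reaction-rate equation with reactions (αʳ, βʳ) and rates k_fw^r, k_bw^r > 0 satisfies detailed balance at c* ∈ (0,∞)^I, i.e. κ*^r := k_fw^r (c*)^{αʳ} = k_bw^r (c*)^{βʳ} for all r. Then with E(c) = Σᵢ cᵢ* λ_B(cᵢ/cᵢ*) and Onsager matrix 𝕂(c) = Σ_r κ*^r Λ(c^{αʳ}/(c*)^{αʳ}, c^{βʳ}/(c*)^{βʳ}) (αʳ−βʳ)⊗(αʳ−βʳ), one has 𝕂(c)·DE(c) = R(c) := Σ_r (k_fw^r c^{αʳ} − k_bw^r c^{βʳ})(αʳ − βʳ) for every c ∈ (0,∞)^I. -/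
open Real Finset

/-- the monomial `c^α = ∏ i, c i ^ α i` -/
def mono {I : ℕ} (c : Fin I → ℝ) (α : Fin I → ℕ) : ℝ := ∏ i, c i ^ α i

/-!
Reaction by reaction: with `a = c^α / c*^α` and `b = c^β / c*^β`, the vector `DE(c)` paired with
`α - β` is `log a - log b`, and the logarithmic mean is exactly the factor that turns this back
into `a - b`. Detailed balance then rewrites `κ* a` and `κ* b` as the forward and backward rates
`k_fw c^α` and `k_bw c^β`.
-/

section Monomial

variable {I : ℕ}

lemma mono_pos {c : Fin I → ℝ} (hc : ∀ i, 0 < c i) (α : Fin I → ℕ) : 0 < mono c α :=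
  prod_pos fun i _ => pow_pos (hc i) _

lemma mono_div (c d : Fin I → ℝ) (α : Fin I → ℕ) :
    mono (c / d) α = mono c α / mono d α := by
  simp only [mono, Pi.div_apply, div_pow, prod_div_distrib]

lemma log_mono {c : Fin I → ℝ} (hc : ∀ i, 0 < c i) (α : Fin I → ℕ) :
    Real.log (mono c α) = ∑ j, (α j : ℝ) * Real.log (c j) := by
  rw [mono, Real.log_prod fun j _ => (pow_pos (hc j) _).ne']
  simp only [Real.log_pow]

lemma sum_sub_mul_log_eq_log_mono_sub {c : Fin I → ℝ} (hc : ∀ i, 0 < c i) (α β : Fin I → ℕ) :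
    ∑ j, ((α j : ℝ) - β j) * Real.log (c j) = Real.log (mono c α) - Real.log (mono c β) := by
  simp only [log_mono hc, ← sum_sub_distrib, sub_mul]

end Monomial

lemma logMean_mul_log_sub {a b : ℝ} (ha : 0 < a) (hb : 0 < b) :
    logMean a b * (Real.log a - Real.log b) = a - b := by
  unfold logMean
  split_ifs with hab
  · simp [hab]
  · refine div_mul_cancel₀ _ (sub_ne_zero.mpr fun hlog => hab ?_)
    exact Real.log_injOn_pos (Set.mem_Ioi.mpr ha) (Set.mem_Ioi.mpr hb) hlog

lemma mul_div_eq_of_eq_mul {κ k m x : ℝ} (hκ : κ = k * m) (hm : m ≠ 0) :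
    κ * (x / m) = k * x := by
  rw [hκ]; field_simp

theorem rre_gradient_structure_general (I R : ℕ) (α β : Fin R → Fin I → ℕ)
    (kfw kbw : Fin R → ℝ)
    (cstar : Fin I → ℝ) (hcstar : ∀ i, 0 < cstar i)
    (κ : Fin R → ℝ)
    (hDB : ∀ r, κ r = kfw r * mono cstar (α r) ∧ κ r = kbw r * mono cstar (β r)) :
    ∀ c : Fin I → ℝ, (∀ i, 0 < c i) → ∀ i : Fin I,
      (∑ r, κ r * logMean (mono c (α r) / mono cstar (α r)) (mono c (β r) / mono cstar (β r))
          * (∑ j, ((α r j : ℝ) - (β r j : ℝ)) * Real.log (c j / cstar j))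
          * ((α r i : ℝ) - (β r i : ℝ)))
      = ∑ r, (kfw r * mono c (α r) - kbw r * mono c (β r)) * ((α r i : ℝ) - (β r i : ℝ)) := by
  intro c hc i
  refine sum_congr rfl fun r _ => congrArg (· * _) ?_
  have hratio : ∀ j, 0 < (c / cstar) j := fun j => div_pos (hc j) (hcstar j)
  have hDE : ∑ j, ((α r j : ℝ) - β r j) * Real.log (c j / cstar j)
      = Real.log (mono c (α r) / mono cstar (α r)) - Real.log (mono c (β r) / mono cstar (β r)) := by
    rw [← mono_div, ← mono_div]
    exact sum_sub_mul_log_eq_log_mono_sub hratio (α r) (β r)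
  rw [hDE, mul_assoc, ← mono_div, ← mono_div,
    logMean_mul_log_sub (mono_pos hratio _) (mono_pos hratio _), mono_div, mono_div, mul_sub,
    mul_div_eq_of_eq_mul (hDB r).1 (mono_pos hcstar _).ne',
    mul_div_eq_of_eq_mul (hDB r).2 (mono_pos hcstar _).ne']

theorem rre_gradient_structure (I R : ℕ) (α β : Fin R → Fin I → ℕ)
    (kfw kbw : Fin R → ℝ) (hkfw : ∀ r, 0 < kfw r) (hkbw : ∀ r, 0 < kbw r)
    (cstar : Fin I → ℝ) (hcstar : ∀ i, 0 < cstar i)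
    (κ : Fin R → ℝ)
    (hDB : ∀ r, κ r = kfw r * mono cstar (α r) ∧ κ r = kbw r * mono cstar (β r)) :
    ∀ c : Fin I → ℝ, (∀ i, 0 < c i) → ∀ i : Fin I,
      (∑ r, κ r * logMean (mono c (α r) / mono cstar (α r)) (mono c (β r) / mono cstar (β r))
          * (∑ j, ((α r j : ℝ) - (β r j : ℝ)) * Real.log (c j / cstar j))
          * ((α r i : ℝ) - (β r i : ℝ)))
      = ∑ r, (kfw r * mono c (α r) - kbw r * mono c (β r)) * ((α r i : ℝ) - (β r i : ℝ)) :=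
  rre_gradient_structure_general I R α β kfw kbw cstar hcstar κ hDB
end

section
/- Assume the detailed-balance condition κ*^r = k_fw^r (c*)^{αʳ} = k_bw^r (c*)^{βʳ} for all r. Then the Poisson product distribution w_n^V = ∏ᵢ e^{−V cᵢ*}(V cᵢ*)^{nᵢ}/nᵢ! satisfies, for every reaction r and every n ∈ ℕ₀^I, k_fw^r 𝔹_V^{αʳ}(n) w_{n+αʳ}^V = k_bw^r 𝔹_V^{βʳ}(n) w_{n+βʳ}^V = κ*^r V w_n^V. -/
open Real Finset

/-!
Coordinatewise, shifting a Poisson weight with mean `x` from `n` to `n + k` multiplies it by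
`x ^ k * n! / (n + k)!`. The factorials cancel against those in `𝔹_V^γ(n)`, and with `x = V c*ᵢ` the
powers of `V` cancel against `V ^ |γ|`, so `𝔹_V^γ(n) w_{n+γ} = V (c*)^γ w_n`. Multiplying by the
forward (backward) rate constant and using detailed balance turns both sides into `κ*^r V w_n`.
-/

open scoped Nat

section PoissonProduct

variable {ι : Type*} [Fintype ι]

/-- The paper's `w_n^V` is `poissonProduct (fun i => V * c*ᵢ) n`. -/
noncomputable def poissonProduct (x : ι → ℝ) (n : ι → ℕ) : ℝ :=
  ∏ i, exp (-x i) * x i ^ n i / (n i)!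

lemma factorial_div_mul_poisson_add (x : ℝ) (n k : ℕ) :
    ((n + k)! / n! : ℝ) * (exp (-x) * x ^ (n + k) / (n + k)!) =
      x ^ k * (exp (-x) * x ^ n / n!) := by
  field_simp
  ring

lemma prod_factorial_div_mul_poissonProduct_add (x : ι → ℝ) (n γ : ι → ℕ) :
    (∏ i, ((n i + γ i)! : ℝ)) / (∏ i, ((n i)! : ℝ)) * poissonProduct x (fun i => n i + γ i) =
      (∏ i, x i ^ γ i) * poissonProduct x n := by
  simp only [poissonProduct, ← prod_div_distrib, ← prod_mul_distrib]
  exact prod_congr rfl fun i _ => factorial_div_mul_poisson_add (x i) (n i) (γ i)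

lemma prod_const_mul_pow (V : ℝ) (c : ι → ℝ) (γ : ι → ℕ) :
    ∏ i, (V * c i) ^ γ i = V ^ (∑ i, γ i) * ∏ i, c i ^ γ i := by
  simp only [mul_pow, prod_mul_distrib, prod_pow_eq_pow_sum]

lemma propensity_mul_poissonProduct_add {V : ℝ} (hV : V ≠ 0) (c : ι → ℝ) (n γ : ι → ℕ) :
    V * (∏ i, ((n i + γ i)! : ℝ)) / (V ^ (∑ i, γ i) * ∏ i, ((n i)! : ℝ)) *
        poissonProduct (fun i => V * c i) (fun i => n i + γ i) =
      V * (∏ i, c i ^ γ i) * poissonProduct (fun i => V * c i) n := by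
  have hVγ : V ^ (∑ i, γ i) ≠ 0 := pow_ne_zero _ hV
  calc _ = V / V ^ (∑ i, γ i) * ((∏ i, ((n i + γ i)! : ℝ)) / (∏ i, ((n i)! : ℝ)) *
          poissonProduct (fun i => V * c i) (fun i => n i + γ i)) := by ring
    _ = _ := by
      rw [prod_factorial_div_mul_poissonProduct_add, prod_const_mul_pow]
      field_simp

end PoissonProduct

theorem cme_detailed_balance_general (I R : ℕ) (α β : Fin R → Fin I → ℕ)
    (kfw kbw : Fin R → ℝ)
    (cstar : Fin I → ℝ)
    (κ : Fin R → ℝ)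
    (hDB : ∀ r, κ r = kfw r * ∏ i, cstar i ^ α r i ∧ κ r = kbw r * ∏ i, cstar i ^ β r i)
    (V : ℝ) (hV : 0 < V)
    (w : (Fin I → ℕ) → ℝ)
    (hw : ∀ n, w n = ∏ i, Real.exp (-(V * cstar i)) * (V * cstar i) ^ (n i) / (Nat.factorial (n i)))
    (B : (Fin I → ℕ) → (Fin I → ℕ) → ℝ)
    (hB : ∀ γ n, B γ n = V * (∏ i, ((Nat.factorial (n i + γ i)) : ℝ)) / (V ^ (∑ i, γ i) * ∏ i, ((Nat.factorial (n i)) : ℝ))) :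
    ∀ r : Fin R, ∀ n : Fin I → ℕ,
      kfw r * B (α r) n * w (fun i => n i + α r i)
        = kbw r * B (β r) n * w (fun i => n i + β r i) ∧
      kfw r * B (α r) n * w (fun i => n i + α r i) = κ r * V * w n := by
  have hw' : w = poissonProduct (fun i => V * cstar i) := funext hw
  have key (γ n : Fin I → ℕ) :
      B γ n * w (fun i => n i + γ i) = V * (∏ i, cstar i ^ γ i) * w n := by
    rw [hB, hw']
    exact propensity_mul_poissonProduct_add hV.ne' cstar n γ
  intro r n
  have hfw : kfw r * B (α r) n * w (fun i => n i + α r i) = κ r * V * w n := by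
    rw [mul_assoc, key, (hDB r).1]
    ring
  have hbw : kbw r * B (β r) n * w (fun i => n i + β r i) = κ r * V * w n := by
    rw [mul_assoc, key, (hDB r).2]
    ring
  exact ⟨hfw.trans hbw.symm, hfw⟩

theorem cme_detailed_balance (I R : ℕ) (α β : Fin R → Fin I → ℕ)
    (kfw kbw : Fin R → ℝ) (hkfw : ∀ r, 0 < kfw r) (hkbw : ∀ r, 0 < kbw r)
    (cstar : Fin I → ℝ) (hcstar : ∀ i, 0 < cstar i)
    (κ : Fin R → ℝ)
    (hDB : ∀ r, κ r = kfw r * ∏ i, cstar i ^ α r i ∧ κ r = kbw r * ∏ i, cstar i ^ β r i)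
    (V : ℝ) (hV : 0 < V)
    (w : (Fin I → ℕ) → ℝ)
    (hw : ∀ n, w n = ∏ i, Real.exp (-(V * cstar i)) * (V * cstar i) ^ (n i) / (Nat.factorial (n i)))
    (B : (Fin I → ℕ) → (Fin I → ℕ) → ℝ)
    (hB : ∀ γ n, B γ n = V * (∏ i, ((Nat.factorial (n i + γ i)) : ℝ)) / (V ^ (∑ i, γ i) * ∏ i, ((Nat.factorial (n i)) : ℝ))) :
    ∀ r : Fin R, ∀ n : Fin I → ℕ,
      kfw r * B (α r) n * w (fun i => n i + α r i)
        = kbw r * B (β r) n * w (fun i => n i + β r i) ∧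
      kfw r * B (α r) n * w (fun i => n i + α r i) = κ r * V * w n :=
  cme_detailed_balance_general I R α β kfw kbw cstar κ hDB V hV w hw B hB
end

section
/- Let c* > 0 and E(c) = c* λ_B(c/c*). For all c ≥ 0 and all n ∈ ℕ₀ with n/V ≤ c ≤ (n+1)/V one has E(c) − E(n/V) ≤ (max{1, 1/c*}/V)(1 + E(c)), and if V ≥ max{1/c*, e c*} and V ≥ e then E(n/V) − E(c) ≤ 2 (log V)/V. -/
open Real

noncomputable def lamB (z : ℝ) : ℝ := z * Real.log z - z + 1

noncomputable def E (cstar c : ℝ) : ℝ := cstar * lamB (c / cstar)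

/- Both estimates come from the tangent-line inequality of the convex function `λ_B`, whose
derivative is `log`: with `a = n / V ≤ c ≤ a + 1 / V`, the difference `E c - E a` is at most
`(c - a) log (c / c*)`, and `log z ≤ 1 + λ_B z` turns this into the first bound. For the second,
the tangent at `a` bounds `E a - E c` by `(c - a) log (c* / a) ≤ 2 log V / V` as soon as
`a ≥ 1 / V`; for `a = 0` one uses instead that `-c log c` increases on `[0, e⁻¹]`. -/

lemma lamB_sub_le_mul_log {z w : ℝ} (hz : 0 < z) (hw : 0 ≤ w) :
    lamB z - lamB w ≤ (z - w) * log z := by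
  rcases hw.eq_or_lt with rfl | hw
  · simp only [lamB, zero_mul, sub_zero, zero_add]
    linarith
  · have hlog : w * (log z - log w) ≤ z - w := by
      calc w * (log z - log w) = w * log (z / w) := by rw [log_div hz.ne' hw.ne']
        _ ≤ w * (z / w - 1) := by gcongr; exact log_le_sub_one_of_pos (div_pos hz hw)
        _ = z - w := by field_simp
    unfold lamB
    linarith

lemma lamB_nonneg {z : ℝ} (hz : 0 ≤ z) : 0 ≤ lamB z := by
  have h := lamB_sub_le_mul_log one_pos hz
  simp only [lamB, log_one, mul_zero] at h
  unfold lamB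
  linarith

-- `λ_B z - log z = (z - 1) (log z - 1)`, which is nonnegative once `log z ≥ 1`.
lemma log_le_one_add_lamB {z : ℝ} (hz : 0 ≤ z) : log z ≤ 1 + lamB z := by
  rcases le_or_gt (log z) 1 with h | h
  · linarith [lamB_nonneg hz]
  · have hz1 : 1 ≤ z := by
      by_contra! hz1
      linarith [log_nonpos hz hz1.le]
    unfold lamB
    nlinarith [mul_nonneg (sub_nonneg.2 hz1) (sub_nonneg.2 h.le)]

lemma E_eq {cstar : ℝ} (hcs : cstar ≠ 0) (c : ℝ) :
    E cstar c = c * log c - c * log cstar - c + cstar := by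
  unfold E lamB
  rcases eq_or_ne c 0 with rfl | hc
  · simp
  · rw [log_div hc hcs]
    field_simp

lemma E_zero (cstar : ℝ) : E cstar 0 = cstar := by
  simp [E, lamB]

lemma E_nonneg {cstar c : ℝ} (hcs : 0 < cstar) (hc : 0 ≤ c) : 0 ≤ E cstar c :=
  mul_nonneg hcs.le (lamB_nonneg (div_nonneg hc hcs.le))

lemma E_sub_le_mul_log {cstar c a : ℝ} (hcs : 0 < cstar) (hc : 0 < c) (ha : 0 ≤ a) :
    E cstar c - E cstar a ≤ (c - a) * log (c / cstar) := by
  have h := lamB_sub_le_mul_log (div_pos hc hcs) (div_nonneg ha hcs.le)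
  calc E cstar c - E cstar a = cstar * (lamB (c / cstar) - lamB (a / cstar)) := by
        unfold E; ring
    _ ≤ cstar * ((c / cstar - a / cstar) * log (c / cstar)) := by gcongr
    _ = (c - a) * log (c / cstar) := by field_simp

lemma log_div_le_max_mul_one_add_E {cstar c : ℝ} (hcs : 0 < cstar) (hc : 0 ≤ c) :
    log (c / cstar) ≤ max 1 (1 / cstar) * (1 + E cstar c) := by
  have hz := div_nonneg hc hcs.le
  have hM : 1 ≤ max 1 (1 / cstar) := le_max_left _ _
  have hMcs : 1 ≤ max 1 (1 / cstar) * cstar := by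
    calc (1 : ℝ) = 1 / cstar * cstar := by field_simp
      _ ≤ max 1 (1 / cstar) * cstar := by gcongr; exact le_max_right _ _
  calc log (c / cstar) ≤ 1 + lamB (c / cstar) := log_le_one_add_lamB hz
    _ ≤ max 1 (1 / cstar) * (1 + E cstar c) := by
      unfold E
      nlinarith [lamB_nonneg hz]

lemma E_sub_le_of_sub_le {cstar a c δ : ℝ} (hcs : 0 < cstar) (ha : 0 ≤ a) (hac : a ≤ c)
    (hδ : c - a ≤ δ) :
    E cstar c - E cstar a ≤ δ * (max 1 (1 / cstar) * (1 + E cstar c)) := by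
  have hc : 0 ≤ c := ha.trans hac
  have hR : 0 ≤ max 1 (1 / cstar) * (1 + E cstar c) :=
    mul_nonneg (zero_le_one.trans (le_max_left _ _)) (by linarith [E_nonneg hcs hc])
  rcases hc.eq_or_lt with rfl | hc
  · rw [le_antisymm hac ha, sub_self]
    exact mul_nonneg (by linarith) hR
  · calc E cstar c - E cstar a ≤ (c - a) * log (c / cstar) := E_sub_le_mul_log hcs hc ha
      _ ≤ (c - a) * (max 1 (1 / cstar) * (1 + E cstar c)) := by
        gcongr
        exact log_div_le_max_mul_one_add_E hcs hc.le
      _ ≤ δ * (max 1 (1 / cstar) * (1 + E cstar c)) := by gcongr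

lemma E_sub_E_le_two_log_div {cstar a c V : ℝ} (hcs : 0 < cstar) (hV : 1 ≤ V)
    (hcsV : cstar ≤ V) (ha : 1 / V ≤ a) (hac : a ≤ c) (hca : c - a ≤ 1 / V) :
    E cstar a - E cstar c ≤ 2 * log V / V := by
  have hV0 : 0 < V := one_pos.trans_le hV
  have ha0 : 0 < a := (one_div_pos.2 hV0).trans_le ha
  have hlogV : 0 ≤ log V := log_nonneg hV
  have hlog : -log (a / cstar) ≤ 2 * log V := by
    have hle : cstar / a ≤ V * V :=
      calc cstar / a ≤ cstar / (1 / V) := by gcongr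
        _ = cstar * V := by field_simp
        _ ≤ V * V := by gcongr
    calc -log (a / cstar) = log (cstar / a) := by rw [← log_inv, inv_div]
      _ ≤ log (V * V) := log_le_log (by positivity) hle
      _ = 2 * log V := by rw [log_mul hV0.ne' hV0.ne']; ring
  calc E cstar a - E cstar c ≤ (a - c) * log (a / cstar) :=
        E_sub_le_mul_log hcs ha0 (ha0.le.trans hac)
    _ = (c - a) * -log (a / cstar) := by ring
    _ ≤ 1 / V * (2 * log V) := by
      nlinarith [mul_le_mul_of_nonneg_left hlog (sub_nonneg.2 hac)]
    _ = 2 * log V / V := by ring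

lemma E_zero_sub_le {cstar c V : ℝ} (hcs : 0 < cstar) (hV : exp 1 ≤ V)
    (hcsV : exp 1 * cstar ≤ V) (hc : 0 ≤ c) (hcV : c ≤ 1 / V) :
    E cstar 0 - E cstar c ≤ 2 * log V / V := by
  have hV0 : 0 < V := (exp_pos 1).trans_le hV
  have hlogV : 0 ≤ log V := log_nonneg (by linarith [add_one_le_exp 1])
  have hentropy : -(c * log c) ≤ log V / V := by
    have hVe : 1 / V ≤ exp (-1) := by
      rw [exp_neg, ← one_div]
      exact one_div_le_one_div_of_le (exp_pos 1) hV
    have h := mul_log_strictAntiOn.antitoneOn ⟨hc, hcV.trans hVe⟩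
      ⟨(one_div_pos.2 hV0).le, hVe⟩ hcV
    simp only [one_div, log_inv] at h
    linarith [show V⁻¹ * -log V = -(log V / V) by ring]
  have hlinear : c * (log cstar + 1) ≤ log V / V := by
    have hlog : log cstar + 1 ≤ log V := by
      have h := log_le_log (by positivity) hcsV
      rwa [log_mul (exp_ne_zero 1) hcs.ne', log_exp, add_comm] at h
    calc c * (log cstar + 1) ≤ c * log V := by gcongr
      _ ≤ 1 / V * log V := by gcongr
      _ = log V / V := by ring
  rw [E_zero, E_eq hcs.ne']
  linear_combination hentropy + hlinear

theorem entropy_comparison_general (cstar : ℝ) (hcstar : 0 < cstar) (V : ℝ) (hV : 0 < V)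
    (c : ℝ) (n : ℕ) (hn1 : (n : ℝ) / V ≤ c) (hn2 : c ≤ ((n : ℝ) + 1) / V) :
    E cstar c - E cstar ((n : ℝ) / V) ≤ max 1 (1 / cstar) / V * (1 + E cstar c) ∧
    (max (1 / cstar) (Real.exp 1 * cstar) ≤ V → Real.exp 1 ≤ V →
      E cstar ((n : ℝ) / V) - E cstar c ≤ 2 * Real.log V / V) := by
  have ha : 0 ≤ (n : ℝ) / V := by positivity
  have hca : c - n / V ≤ 1 / V := by rw [add_div] at hn2; linarith
  refine ⟨?_, fun hmax he ↦ ?_⟩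
  · calc E cstar c - E cstar (n / V) ≤ 1 / V * (max 1 (1 / cstar) * (1 + E cstar c)) :=
          E_sub_le_of_sub_le hcstar ha hn1 hca
      _ = max 1 (1 / cstar) / V * (1 + E cstar c) := by ring
  have hecs : exp 1 * cstar ≤ V := (le_max_right _ _).trans hmax
  rcases n.eq_zero_or_pos with rfl | hn
  · simp only [CharP.cast_eq_zero, zero_div, zero_add] at hn1 hn2 ⊢
    exact E_zero_sub_le hcstar he hecs hn1 hn2
  · have hcsV : cstar ≤ V := le_trans (by nlinarith [add_one_le_exp 1]) hecs
    have haV : 1 / V ≤ n / V := by gcongr; exact_mod_cast hn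
    exact E_sub_E_le_two_log_div hcstar (by linarith [add_one_le_exp 1]) hcsV haV hn1 hca

theorem entropy_comparison (cstar : ℝ) (hcstar : 0 < cstar) (V : ℝ) (hV : 0 < V)
    (c : ℝ) (hc : 0 ≤ c) (n : ℕ) (hn1 : (n : ℝ) / V ≤ c) (hn2 : c ≤ ((n : ℝ) + 1) / V) :
    E cstar c - E cstar ((n : ℝ) / V) ≤ max 1 (1 / cstar) / V * (1 + E cstar c) ∧
    (max (1 / cstar) (Real.exp 1 * cstar) ≤ V → Real.exp 1 ≤ V →
      E cstar ((n : ℝ) / V) - E cstar c ≤ 2 * Real.log V / V) :=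
  entropy_comparison_general cstar hcstar V hV c n hn1 hn2
end
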